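/- Let R ⊆ ℤ^d be a set of ℤ^d-Bohr recurrence. Then there exists a permutation φ of {1,…,d} such that the set R'' = {(n_{φ(1)},…,n_{φ(d)}) : n ∈ R and |n_{φ(1)}| ≥ |n_{φ(2)}| ≥ … ≥ |n_{φ(d)}|} is an ordered set of ℤ^d-Bohr recurrence; moreover, if R is essential then R'' is essential. -/

import Mathlib

open scoped BigOperators

noncomputable section

/-- Distance from a real number to the nearest integer. -/
def torusNorm (x : ℝ) : ℝ := |x - round x|

/-- A subset `V ⊆ ℤ^d` is a Bohr₀ set if there are `k ≥ 1`, vectors `α₁, …, α_k ∈ ℝ^d`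
and `ε > 0` such that every `n ∈ ℤ^d` with `‖n·αⱼ‖_𝕋 < ε` for all `j` belongs to `V`. -/
def IsBohr0 (d : ℕ) (V : Set (Fin d → ℤ)) : Prop :=
  ∃ k : ℕ, 1 ≤ k ∧ ∃ α : Fin k → Fin d → ℝ, ∃ ε : ℝ, 0 < ε ∧
    ∀ n : Fin d → ℤ, (∀ j : Fin k, torusNorm (∑ i, (n i : ℝ) * α j i) < ε) → n ∈ V

/-- `R ⊆ ℤ^d` is a set of `ℤ^d`-Bohr recurrence if it meets every Bohr₀ set. -/
def IsBohrRecurrence (d : ℕ) (R : Set (Fin d → ℤ)) : Prop :=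
  ∀ V : Set (Fin d → ℤ), IsBohr0 d V → (R ∩ V).Nonempty

/-- `R` is essential: every element has all coordinates nonzero. -/
def IsEssential {d : ℕ} (R : Set (Fin d → ℤ)) : Prop :=
  ∀ n ∈ R, ∀ i, n i ≠ 0

/-- `R` is ordered: every `n ∈ R` satisfies `|n₁| ≥ |n₂| ≥ … ≥ |n_d|`. -/
def IsOrderedSet {d : ℕ} (R : Set (Fin d → ℤ)) : Prop :=
  ∀ n ∈ R, ∀ i j : Fin d, i ≤ j → |n j| ≤ |n i|

open Filter

/-!
The Bohr₀ sets of `ℤ^d` form a filter, and a set is a set of Bohr recurrence exactly when it is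
frequently hit along this filter. Every `n ∈ R` becomes ordered after some coordinate permutation,
so `R` is covered by the finitely many pieces indexed by permutations; a finite cover of a
frequently hit set has a frequently hit piece. Finally the filter is invariant under permuting
coordinates, so permuting that piece keeps it a set of Bohr recurrence.
-/

lemma isBohr0_univ (d : ℕ) : IsBohr0 d Set.univ :=
  ⟨1, le_rfl, fun _ _ => 0, 1, one_pos, fun n _ => Set.mem_univ n⟩

lemma IsBohr0.mono {d : ℕ} {V W : Set (Fin d → ℤ)} (hV : IsBohr0 d V) (hVW : V ⊆ W) :
    IsBohr0 d W := by
  obtain ⟨k, hk, α, ε, hε, h⟩ := hV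
  exact ⟨k, hk, α, ε, hε, fun n hn => hVW (h n hn)⟩

lemma IsBohr0.inter {d : ℕ} {V W : Set (Fin d → ℤ)} (hV : IsBohr0 d V) (hW : IsBohr0 d W) :
    IsBohr0 d (V ∩ W) := by
  obtain ⟨k₁, hk₁, α₁, ε₁, hε₁, h₁⟩ := hV
  obtain ⟨k₂, hk₂, α₂, ε₂, hε₂, h₂⟩ := hW
  refine ⟨k₁ + k₂, le_add_right hk₁, Fin.append α₁ α₂, min ε₁ ε₂, lt_min hε₁ hε₂,
    fun n hn => ⟨h₁ n fun j => ?_, h₂ n fun j => ?_⟩⟩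
  · simpa using (hn (Fin.castAdd k₂ j)).trans_le (min_le_left _ _)
  · simpa using (hn (Fin.natAdd k₁ j)).trans_le (min_le_right _ _)

/-- Permuting the coordinates of `n` amounts to permuting those of the frequencies `αⱼ`. -/
lemma IsBohr0.preimage_comp_perm {d : ℕ} {V : Set (Fin d → ℤ)} (hV : IsBohr0 d V)
    (φ : Equiv.Perm (Fin d)) : IsBohr0 d ((fun n => n ∘ φ) ⁻¹' V) := by
  obtain ⟨k, hk, α, ε, hε, h⟩ := hV
  refine ⟨k, hk, fun j => α j ∘ φ.symm, ε, hε, fun n hn => h _ fun j => ?_⟩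
  have hsum : ∑ i, ((n ∘ φ) i : ℝ) * α j i = ∑ i, (n i : ℝ) * (α j ∘ φ.symm) i := by
    rw [← Equiv.sum_comp φ (fun i => (n i : ℝ) * (α j ∘ φ.symm) i)]
    simp
  rw [hsum]
  exact hn j

def bohrFilter (d : ℕ) : Filter (Fin d → ℤ) where
  sets := {V | IsBohr0 d V}
  univ_sets := isBohr0_univ d
  sets_of_superset := IsBohr0.mono
  inter_sets := IsBohr0.inter

lemma isBohrRecurrence_iff_frequently {d : ℕ} {R : Set (Fin d → ℤ)} :
    IsBohrRecurrence d R ↔ ∃ᶠ n in bohrFilter d, n ∈ R := by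
  rw [frequently_iff]
  exact forall₂_congr fun V _ => by simp [Set.Nonempty, and_comm]

lemma tendsto_comp_perm_bohrFilter (d : ℕ) (φ : Equiv.Perm (Fin d)) :
    Tendsto (fun n => n ∘ φ) (bohrFilter d) (bohrFilter d) :=
  fun _ hV => IsBohr0.preimage_comp_perm hV φ

lemma Tuple.exists_perm_antitone {n : ℕ} {α : Type*} [LinearOrder α] (f : Fin n → α) :
    ∃ σ : Equiv.Perm (Fin n), Antitone (f ∘ σ) :=
  ⟨Tuple.sort (OrderDual.toDual ∘ f), Tuple.monotone_sort (OrderDual.toDual ∘ f)⟩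

/-- Any set of `ℤ^d`-Bohr recurrence can be turned into an ordered one by permuting
coordinates and restricting to the elements whose permuted coordinates are ordered;
essentiality is preserved. -/
theorem reduction_to_ordered_bohr_recurrence
    (d : ℕ) (R : Set (Fin d → ℤ)) (hR : IsBohrRecurrence d R) :
    ∃ φ : Equiv.Perm (Fin d),
      IsBohrRecurrence d
        {m : Fin d → ℤ | ∃ n ∈ R,
          (∀ i j : Fin d, i ≤ j → |n (φ j)| ≤ |n (φ i)|) ∧ m = n ∘ ⇑φ} ∧
      IsOrderedSet
        {m : Fin d → ℤ | ∃ n ∈ R,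
          (∀ i j : Fin d, i ≤ j → |n (φ j)| ≤ |n (φ i)|) ∧ m = n ∘ ⇑φ} ∧
      (IsEssential R →
        IsEssential
          {m : Fin d → ℤ | ∃ n ∈ R,
            (∀ i j : Fin d, i ≤ j → |n (φ j)| ≤ |n (φ i)|) ∧ m = n ∘ ⇑φ}) := by
  have hcover : ∃ᶠ n in bohrFilter d,
      ∃ φ : Equiv.Perm (Fin d), n ∈ R ∧ Antitone ((fun i => |n i|) ∘ φ) :=
    (isBohrRecurrence_iff_frequently.1 hR).mono fun n hn =>
      (Tuple.exists_perm_antitone fun i => |n i|).imp fun _ h => ⟨hn, h⟩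
  obtain ⟨φ, hφ⟩ := frequently_exists.1 hcover
  refine ⟨φ, isBohrRecurrence_iff_frequently.2 ?_, ?_, ?_⟩
  · exact (tendsto_comp_perm_bohrFilter d φ).frequently
      (hφ.mono fun n ⟨hn, hord⟩ => ⟨n, hn, fun _ _ hij => hord hij, rfl⟩)
  · rintro m ⟨n, -, hord, rfl⟩
    exact hord
  · rintro hess m ⟨n, hn, -, rfl⟩ i
    exact hess n hn (φ i)
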